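/- A family 𝒯 of theories in L is representable by a normal default theory if and only if 𝒯 = {L} or there exist a consistent set of formulas W and a set of formulas Ψ such that 𝒯 = { Cn(W ∪ Φ) : Φ ⊆ Ψ and Φ is maximal with the property that W ∪ Φ is consistent }. -/
import Mathlib


/-- Propositional formulas over a set of atoms `α`. -/
inductive PropForm (α : Type) : Type
  | atom : α → PropForm α
  | fls  : PropForm α
  | impl : PropForm α → PropForm α → PropForm α

namespace PropForm

/-- Negation `¬φ`, definable as `φ → ⊥`. -/
def neg {α : Type} (φ : PropForm α) : PropForm α := impl φ fls

/-- Conjunction, definable from implication and falsum. -/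
def conj {α : Type} (φ ψ : PropForm α) : PropForm α := (φ.impl ψ.neg).neg

/-- Biimplication `φ ↔ ψ`. -/
def biimp {α : Type} (φ ψ : PropForm α) : PropForm α := conj (φ.impl ψ) (ψ.impl φ)

/-- Evaluation of a formula under a valuation of the atoms. -/
def eval {α : Type} (v : α → Prop) : PropForm α → Prop
  | atom a   => v a
  | fls      => False
  | impl φ ψ => eval v φ → eval v ψ

/-- Renaming/embedding of atoms. -/
def map {α β : Type} (f : α → β) : PropForm α → PropForm β
  | atom a   => atom (f a)
  | fls      => fls
  | impl φ ψ => impl (map f φ) (map f ψ)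

end PropForm

/-- Classical propositional consequence operator. -/
def Cn {α : Type} (S : Set (PropForm α)) : Set (PropForm α) :=
  {φ | ∀ v : α → Prop, (∀ ψ ∈ S, ψ.eval v) → φ.eval v}

/-- A theory: a set of formulas closed under propositional consequence. -/
def IsTheory {α : Type} (S : Set (PropForm α)) : Prop := Cn S ⊆ S

/-- A set of formulas is consistent if its consequences are not the whole language. -/
def Consistent {α : Type} (S : Set (PropForm α)) : Prop := Cn S ≠ Set.univ

/-- A default `α : Γ / β` with prerequisite, finite set of justifications, consequent. -/
structure Default (α : Type) where
  pre : PropForm α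
  jus : Finset (PropForm α)
  con : PropForm α

/-- A default is applicable w.r.t. `S` if no justification's negation follows from `S`. -/
def Default.Applicable {α : Type} (S : Set (PropForm α)) (d : Default α) : Prop :=
  ∀ γ ∈ d.jus, γ.neg ∉ Cn S

/-- The reduct of `D` w.r.t. `S`: the monotone rules `pre/con` of `S`-applicable defaults. -/
def Reduct {α : Type} (D : Set (Default α)) (S : Set (PropForm α)) :
    Set (PropForm α × PropForm α) :=
  {r | ∃ d ∈ D, d.Applicable S ∧ r = (d.pre, d.con)}

/-- `Cn^B(W)`: consequences of `W` in propositional calculus augmented with rules `B`;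
the least set containing `W`, closed under `Cn`, and closed under the rules of `B`. -/
def CnRules {α : Type} (B : Set (PropForm α × PropForm α)) (W : Set (PropForm α)) :
    Set (PropForm α) :=
  ⋂₀ {S | W ⊆ S ∧ Cn S ⊆ S ∧ ∀ r ∈ B, r.1 ∈ S → r.2 ∈ S}

/-- `S` is an extension of the default theory `(D, W)`. -/
def IsExtension {α : Type} (D : Set (Default α)) (W S : Set (PropForm α)) : Prop :=
  S = CnRules (Reduct D S) W

/-- The family of all extensions of `(D, W)`. -/
def ext {α : Type} (D : Set (Default α)) (W : Set (PropForm α)) : Set (Set (PropForm α)) :=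
  {S | IsExtension D W S}

/-- A default is prerequisite-free if its prerequisite is a tautology. -/
def Default.PrereqFree {α : Type} (d : Default α) : Prop :=
  d.pre ∈ Cn (∅ : Set (PropForm α))

/-- A default is normal if it has the form `α : {β} / β`. -/
def Default.Normal {α : Type} (d : Default α) : Prop := d.jus = {d.con}

section Aux
variable {α : Type}

def Sat (v : α → Prop) (X : Set (PropForm α)) : Prop := ∀ ψ ∈ X, ψ.eval v

lemma subset_Cn (X : Set (PropForm α)) : X ⊆ Cn X := fun φ hφ v hv => hv φ hφ

lemma Cn_mono {X Y : Set (PropForm α)} (h : X ⊆ Y) : Cn X ⊆ Cn Y :=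
  fun _ hφ v hv => hφ v (fun ψ hψ => hv ψ (h hψ))

lemma Cn_subset_of_subset_Cn {X Y : Set (PropForm α)} (h : X ⊆ Cn Y) : Cn X ⊆ Cn Y :=
  fun _ hφ v hv => hφ v (fun ψ hψ => h hψ v hv)

lemma Cn_Cn (X : Set (PropForm α)) : Cn (Cn X) = Cn X :=
  Set.Subset.antisymm (Cn_subset_of_subset_Cn (le_refl _)) (Cn_mono (subset_Cn X))

lemma consistent_iff {X : Set (PropForm α)} : Consistent X ↔ ∃ v, Sat v X := by
  constructor
  · intro h
    by_contra hn
    apply h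
    ext φ
    simp only [Set.mem_univ, iff_true]
    exact fun v hv => absurd ⟨v, hv⟩ hn
  · rintro ⟨v, hv⟩ h
    have : PropForm.fls ∈ Cn X := h ▸ Set.mem_univ _
    exact this v hv

lemma not_consistent_of_mem_neg {X : Set (PropForm α)} {ψ : PropForm α}
    (h1 : ψ ∈ Cn X) (h2 : ψ.neg ∈ Cn X) : ¬ Consistent X := by
  intro hc
  rcases consistent_iff.1 hc with ⟨v, hv⟩
  exact h2 v hv (h1 v hv)

lemma neg_notMem_Cn_iff {X : Set (PropForm α)} {ψ : PropForm α} :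
    ψ.neg ∉ Cn X ↔ ∃ v, Sat v X ∧ ψ.eval v := by
  constructor
  · intro h
    by_contra hn
    push_neg at hn
    exact h (fun v hv he => hn v hv he)
  · rintro ⟨v, hv, he⟩ h
    exact h v hv he

lemma consistent_mono {X Y : Set (PropForm α)} (h : X ⊆ Y) (hY : Consistent Y) :
    Consistent X := by
  rcases consistent_iff.1 hY with ⟨v, hv⟩
  exact consistent_iff.2 ⟨v, fun ψ hψ => hv ψ (h hψ)⟩

lemma consistent_union_singleton {X : Set (PropForm α)} {ψ : PropForm α}
    (h : ψ.neg ∉ Cn X) : Consistent (X ∪ {ψ}) := by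
  rcases neg_notMem_Cn_iff.1 h with ⟨v, hv, he⟩
  refine consistent_iff.2 ⟨v, fun χ hχ => ?_⟩
  rcases hχ with hχ | hχ
  · exact hv χ hχ
  · rcases hχ with rfl; exact he

lemma eval_congr {v w : α → Prop} (h : ∀ a, v a ↔ w a) :
    ∀ φ : PropForm α, φ.eval v ↔ φ.eval w
  | .atom a => h a
  | .fls => Iff.rfl
  | .impl φ ψ => imp_congr (eval_congr h φ) (eval_congr h ψ)

lemma isClopen_evalSet (φ : PropForm α) :
    IsClopen {b : α → Bool | φ.eval (fun a => b a = true)} := by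
  induction φ with
  | atom a =>
      have : {b : α → Bool | (PropForm.atom a).eval (fun a => b a = true)}
          = (fun b : α → Bool => b a) ⁻¹' {true} := by
        ext b; simp [PropForm.eval]
      rw [this]
      exact (isClopen_discrete _).preimage (continuous_apply a)
  | fls =>
      have : {b : α → Bool | (PropForm.fls : PropForm α).eval (fun a => b a = true)} = ∅ := by
        ext b; simp [PropForm.eval]
      rw [this]; exact isClopen_empty
  | impl φ ψ ihφ ihψ =>
      have : {b : α → Bool | (φ.impl ψ).eval (fun a => b a = true)} =
          {b : α → Bool | φ.eval (fun a => b a = true)}ᶜ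
            ∪ {b : α → Bool | ψ.eval (fun a => b a = true)} := by
        ext b
        simp only [Set.mem_setOf_eq, Set.mem_union, Set.mem_compl_iff, PropForm.eval]
        tauto
      rw [this]; exact (ihφ.compl).union ihψ

lemma sat_of_finsat {X : Set (PropForm α)}
    (h : ∀ F : Finset (PropForm α), ↑F ⊆ X → ∃ v : α → Prop, Sat v ↑F) :
    ∃ v : α → Prop, Sat v X := by
  classical
  by_contra hn
  have hZ : ∀ ψ : X, IsClosed {b : α → Bool | (ψ : PropForm α).eval (fun a => b a = true)} :=
    fun ψ => (isClopen_evalSet _).isClosed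
  have hempty : (Set.univ ∩ ⋂ ψ : X,
      {b : α → Bool | (ψ : PropForm α).eval (fun a => b a = true)}) = ∅ := by
    rw [Set.eq_empty_iff_forall_notMem]
    intro b hb
    apply hn
    refine ⟨fun a => b a = true, fun ψ hψ => ?_⟩
    have := (Set.mem_iInter.1 hb.2) ⟨ψ, hψ⟩
    exact this
  obtain ⟨t, ht⟩ := IsCompact.elim_finite_subfamily_closed isCompact_univ
    (fun ψ : X => {b : α → Bool | (ψ : PropForm α).eval (fun a => b a = true)}) hZ hempty
  obtain ⟨v, hv⟩ := h (t.image Subtype.val) (by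
    intro x hx
    simp only [Finset.coe_image, Set.mem_image, Finset.mem_coe] at hx
    rcases hx with ⟨ψ, _, rfl⟩
    exact ψ.2)
  rw [Set.eq_empty_iff_forall_notMem] at ht
  apply ht (fun a => decide (v a))
  refine ⟨Set.mem_univ _, Set.mem_iInter₂.2 fun ψ hψ => ?_⟩
  have h1 : (ψ : PropForm α).eval v :=
    hv ψ.1 (Finset.mem_coe.2 (Finset.mem_image_of_mem _ hψ))
  have h2 : ∀ a, v a ↔ (decide (v a) = true) := fun a => by simp
  exact (eval_congr h2 _).1 h1

lemma mem_Cn_finset {X : Set (PropForm α)} {φ : PropForm α} (h : φ ∈ Cn X) :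
    ∃ F : Finset (PropForm α), ↑F ⊆ X ∧ φ ∈ Cn ↑F := by
  classical
  by_contra hn
  push_neg at hn
  have h1 : ∀ F : Finset (PropForm α), ↑F ⊆ X ∪ {φ.neg} → ∃ v : α → Prop, Sat v ↑F := by
    intro F hF
    set F' := F.erase φ.neg with hF'def
    have hF'X : ↑F' ⊆ X := by
      intro x hx
      simp only [hF'def, Finset.coe_erase, Set.mem_diff, Finset.mem_coe] at hx
      rcases hF hx.1 with h' | h'
      · exact h'
      · exact absurd h' hx.2
    have hnot := hn F' hF'X
    have : ∃ v, Sat v (↑F' : Set (PropForm α)) ∧ ¬ φ.eval v := by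
      by_contra hc
      push_neg at hc
      exact hnot (fun v hv => hc v hv)
    rcases this with ⟨v, hv, hφv⟩
    refine ⟨v, fun ψ hψ => ?_⟩
    by_cases hψφ : ψ = φ.neg
    · subst hψφ; exact fun he => hφv he
    · exact hv ψ (Finset.mem_coe.2 (Finset.mem_erase.2 ⟨hψφ, Finset.mem_coe.1 hψ⟩))
  rcases sat_of_finsat h1 with ⟨v, hv⟩
  have hXv : Sat v X := fun ψ hψ => hv ψ (Or.inl hψ)
  exact (hv φ.neg (Or.inr rfl)) (h v hXv)

end Aux

section Aux2
variable {α : Type}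

/-! ### CnRules basics -/

lemma subset_CnRules (B : Set (PropForm α × PropForm α)) (W : Set (PropForm α)) :
    W ⊆ CnRules B W :=
  fun _ hφ => Set.mem_sInter.2 (fun _ hS => hS.1 hφ)

lemma CnRules_theory (B : Set (PropForm α × PropForm α)) (W : Set (PropForm α)) :
    Cn (CnRules B W) ⊆ CnRules B W := by
  intro φ hφ
  refine Set.mem_sInter.2 (fun S hS => ?_)
  exact hS.2.1 (Cn_mono (fun x hx => Set.mem_sInter.1 hx S hS) hφ)

lemma CnRules_rules {B : Set (PropForm α × PropForm α)} {W : Set (PropForm α)} :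
    ∀ r ∈ B, r.1 ∈ CnRules B W → r.2 ∈ CnRules B W := by
  intro r hr h1
  refine Set.mem_sInter.2 (fun S hS => ?_)
  exact hS.2.2 r hr (Set.mem_sInter.1 h1 S hS)

lemma CnRules_min {B : Set (PropForm α × PropForm α)} {W S : Set (PropForm α)}
    (h1 : W ⊆ S) (h2 : Cn S ⊆ S) (h3 : ∀ r ∈ B, r.1 ∈ S → r.2 ∈ S) :
    CnRules B W ⊆ S :=
  fun _ hφ => Set.mem_sInter.1 hφ S ⟨h1, h2, h3⟩

lemma Cn_subset_CnRules (B : Set (PropForm α × PropForm α)) (W : Set (PropForm α)) :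
    Cn W ⊆ CnRules B W :=
  fun φ hφ => CnRules_theory B W (Cn_mono (subset_CnRules B W) hφ)

/-! ### Conjunctions of lists -/

def conjList (L : List (PropForm α)) : PropForm α :=
  L.foldr PropForm.conj (PropForm.neg PropForm.fls)

lemma eval_conj {v : α → Prop} (φ ψ : PropForm α) :
    (φ.conj ψ).eval v ↔ φ.eval v ∧ ψ.eval v := by
  simp only [PropForm.conj, PropForm.neg, PropForm.eval]
  tauto

lemma eval_conjList {v : α → Prop} :
    ∀ L : List (PropForm α), (conjList L).eval v ↔ ∀ c ∈ L, c.eval v := by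
  intro L
  induction L with
  | nil => simp [conjList, PropForm.neg, PropForm.eval]
  | cons c L ih =>
      show ((c.conj (conjList L)).eval v) ↔ _
      rw [eval_conj, ih]
      simp

lemma conjList_mem_Cn {X : Set (PropForm α)} {L : List (PropForm α)}
    (h : ∀ c ∈ L, c ∈ Cn X) : conjList L ∈ Cn X :=
  fun v hv => (eval_conjList L).2 (fun c hc => h c hc v hv)

lemma mem_Cn_of_conjList {X : Set (PropForm α)} {L : List (PropForm α)} {c : PropForm α}
    (hL : conjList L ∈ Cn X) (hc : c ∈ L) : c ∈ Cn X :=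
  fun v hv => (eval_conjList L).1 (hL v hv) c hc

lemma conjList_mem_Cn_self (L : List (PropForm α)) : conjList L ∈ Cn {c | c ∈ L} :=
  conjList_mem_Cn (fun c hc => subset_Cn _ hc)

/-! ### Grounded chains -/

def consSet (l : List (Default α)) : Set (PropForm α) := {c | c ∈ l.map Default.con}

inductive Grounded (D : Set (Default α)) (W : Set (PropForm α)) : List (Default α) → Prop
  | nil : Grounded D W []
  | snoc {l : List (Default α)} {d : Default α} : Grounded D W l → d ∈ D →
      d.pre ∈ Cn (W ∪ consSet l) → Grounded D W (l ++ [d])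

lemma consSet_append (l₁ l₂ : List (Default α)) :
    consSet (l₁ ++ l₂) = consSet l₁ ∪ consSet l₂ := by
  ext c; simp [consSet]

lemma Grounded.append {D : Set (Default α)} {W : Set (PropForm α)}
    {l₁ l₂ : List (Default α)} (h1 : Grounded D W l₁) (h2 : Grounded D W l₂) :
    Grounded D W (l₁ ++ l₂) := by
  induction h2 with
  | nil => simpa using h1
  | @snoc l d hg hD hpre ih =>
      rw [← List.append_assoc]
      refine ih.snoc hD (Cn_mono ?_ hpre)
      rw [consSet_append]
      exact Set.union_subset_union_right W Set.subset_union_right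

/-- The set of "chain formulas" of a default theory. -/
def ChainSet (D : Set (Default α)) (W : Set (PropForm α)) : Set (PropForm α) :=
  {ψ | ∃ l, Grounded D W l ∧ ψ = conjList (l.map Default.con)}

lemma exists_grounded_of_finset {D : Set (Default α)} {W : Set (PropForm α)}
    (F : Finset (PropForm α)) (hF : ∀ ψ ∈ F, ψ ∈ ChainSet D W) :
    ∃ l, Grounded D W l ∧ (∀ ψ ∈ F, ψ ∈ Cn (consSet l)) ∧
      (∀ c ∈ consSet l, ∃ ψ ∈ F, c ∈ Cn {ψ}) := by
  classical
  induction F using Finset.induction_on with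
  | empty => exact ⟨[], Grounded.nil, by simp, by simp [consSet]⟩
  | @insert a s ha ih =>
      obtain ⟨l, hl, hall, hback⟩ := ih (fun ψ hψ => hF ψ (Finset.mem_insert_of_mem hψ))
      obtain ⟨l₁, hl₁, heq⟩ := hF a (Finset.mem_insert_self a s)
      refine ⟨l₁ ++ l, hl₁.append hl, ?_, ?_⟩
      · intro ψ hψ
        have hs1 : consSet l₁ ⊆ consSet (l₁ ++ l) := by
          rw [consSet_append]; exact Set.subset_union_left
        have hs2 : consSet l ⊆ consSet (l₁ ++ l) := by
          rw [consSet_append]; exact Set.subset_union_right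
        rcases Finset.mem_insert.1 hψ with rfl | hψ
        · refine Cn_mono hs1 ?_
          rw [heq]; exact conjList_mem_Cn_self _
        · exact Cn_mono hs2 (hall ψ hψ)
      · intro c hc
        rw [consSet_append] at hc
        rcases hc with hc | hc
        · refine ⟨a, Finset.mem_insert_self a s, ?_⟩
          refine mem_Cn_of_conjList (L := l₁.map Default.con) ?_ hc
          rw [← heq]; exact subset_Cn _ rfl
        · obtain ⟨ψ, hψ, hψc⟩ := hback c hc
          exact ⟨ψ, Finset.mem_insert_of_mem hψ, hψc⟩

lemma exists_grounded_chain {D : Set (Default α)} {W Φ : Set (PropForm α)}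
    (hΦ : Φ ⊆ ChainSet D W) {φ : PropForm α} (hpre : φ ∈ Cn (W ∪ Φ)) :
    ∃ l, Grounded D W l ∧ φ ∈ Cn (W ∪ consSet l) ∧
      ∀ c ∈ consSet l, c ∈ Cn (W ∪ Φ) := by
  classical
  obtain ⟨F, hFsub, hφF⟩ := mem_Cn_finset hpre
  set F' := F.filter (· ∈ Φ) with hF'def
  have hF'Ψ : ∀ ψ ∈ F', ψ ∈ ChainSet D W :=
    fun ψ hψ => hΦ (Finset.mem_filter.1 hψ).2
  obtain ⟨l, hl, hall, hback⟩ := exists_grounded_of_finset F' hF'Ψ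
  refine ⟨l, hl, ?_, ?_⟩
  · have hsub : (↑F : Set (PropForm α)) ⊆ Cn (W ∪ consSet l) := by
      intro x hx
      rcases hFsub hx with hxW | hxΦ
      · exact subset_Cn _ (Or.inl hxW)
      · have hxF' : x ∈ F' := Finset.mem_filter.2 ⟨Finset.mem_coe.1 hx, hxΦ⟩
        exact Cn_mono Set.subset_union_right (hall x hxF')
    exact Cn_subset_of_subset_Cn hsub hφF
  · intro c hc
    obtain ⟨ψ, hψ, hψc⟩ := hback c hc
    have hψΦ : ψ ∈ Φ := (Finset.mem_filter.1 hψ).2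
    exact Cn_mono (Set.singleton_subset_iff.2 (Or.inr hψΦ)) hψc

/-! ### Normal default theories -/

lemma normal_applicable {d : Default α} (hd : d.Normal) {S : Set (PropForm α)} :
    d.Applicable S ↔ d.con.neg ∉ Cn S := by
  unfold Default.Applicable
  rw [hd]
  simp

lemma extension_W_subset {D : Set (Default α)} {W E : Set (PropForm α)}
    (hE : IsExtension D W E) : W ⊆ E := hE ▸ subset_CnRules _ W

lemma extension_theory {D : Set (Default α)} {W E : Set (PropForm α)}
    (hE : IsExtension D W E) : Cn E ⊆ E := by
  conv_rhs => rw [hE]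
  intro x hx
  exact CnRules_theory _ _ (by rw [← hE]; exact hx)

lemma extension_closed {D : Set (Default α)} {W E : Set (PropForm α)}
    (hE : IsExtension D W E) :
    ∀ d ∈ D, d.Applicable E → d.pre ∈ E → d.con ∈ E := by
  intro d hd happ hpre
  rw [hE]
  exact CnRules_rules (d.pre, d.con) ⟨d, hd, happ, rfl⟩ (by rw [← hE]; exact hpre)

lemma extension_min {D : Set (Default α)} {W E S : Set (PropForm α)}
    (hE : IsExtension D W E) (h1 : W ⊆ S) (h2 : Cn S ⊆ S)
    (h3 : ∀ d ∈ D, d.Applicable E → d.pre ∈ S → d.con ∈ S) : E ⊆ S := by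
  rw [hE]
  refine CnRules_min h1 h2 ?_
  rintro r ⟨d, hd, happ, rfl⟩
  exact h3 d hd happ

lemma extension_consistent {D : Set (Default α)} {W E : Set (PropForm α)}
    (hN : ∀ d ∈ D, d.Normal) (hW : Consistent W) (hE : IsExtension D W E) :
    Consistent E := by
  by_contra hc
  have hCnE : Cn E = Set.univ := not_not.1 hc
  have hRed : Reduct D E = ∅ := by
    rw [Set.eq_empty_iff_forall_notMem]
    rintro r ⟨d, hd, happ, rfl⟩
    have := (normal_applicable (hN d hd)).1 happ
    exact this (hCnE ▸ Set.mem_univ _)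
  have hECnW : E = Cn W := by
    apply Set.Subset.antisymm
    · refine extension_min hE (subset_Cn W) (by rw [Cn_Cn]) ?_
      intro d hd happ
      exfalso
      have : (d.pre, d.con) ∈ Reduct D E := ⟨d, hd, happ, rfl⟩
      rw [hRed] at this
      exact this
    · rw [hE]; exact Cn_subset_CnRules _ _
  apply hW
  rw [← Cn_Cn W, ← hECnW]
  exact hCnE

end Aux2

section Aux3
variable {α : Type}

lemma taut_mem_Cn (X : Set (PropForm α)) :
    (PropForm.fls.impl PropForm.fls) ∈ Cn X := by
  intro v _
  show False → False
  exact fun h => h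

lemma extension_mem_family {D : Set (Default α)} {W E : Set (PropForm α)}
    (hN : ∀ d ∈ D, d.Normal) (hW : Consistent W) (hE : IsExtension D W E) :
    ∃ Φ ⊆ ChainSet D W, Consistent (W ∪ Φ) ∧
      (∀ Φ', Φ ⊆ Φ' → Φ' ⊆ ChainSet D W → Consistent (W ∪ Φ') → Φ' = Φ) ∧
      E = Cn (W ∪ Φ) := by
  have hEcons := extension_consistent hN hW hE
  have hWE := extension_W_subset hE
  have hCnE := extension_theory hE
  set Φ := ChainSet D W ∩ E with hΦdef
  have hΦsub : Φ ⊆ ChainSet D W := Set.inter_subset_left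
  have hsub1 : Cn (W ∪ Φ) ⊆ E := by
    intro x hx
    exact hCnE (Cn_mono (Set.union_subset hWE Set.inter_subset_right) hx)
  have hsub2 : E ⊆ Cn (W ∪ Φ) := by
    refine extension_min hE (fun x hx => subset_Cn _ (Or.inl hx))
      (fun x hx => by rwa [Cn_Cn] at hx) ?_
    intro d hd happ hpre
    obtain ⟨l, hl, hpre', hcons'⟩ := exists_grounded_chain hΦsub hpre
    have hpreE : d.pre ∈ E := hsub1 hpre
    have hconE : d.con ∈ E := extension_closed hE d hd happ hpreE
    have hl' : Grounded D W (l ++ [d]) := hl.snoc hd hpre'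
    have hψ'Ψ : conjList ((l ++ [d]).map Default.con) ∈ ChainSet D W := ⟨l ++ [d], hl', rfl⟩
    have hψ'E : conjList ((l ++ [d]).map Default.con) ∈ E := by
      refine hCnE (conjList_mem_Cn ?_)
      intro c hc
      rw [List.map_append, List.mem_append] at hc
      rcases hc with hc | hc
      · exact subset_Cn _ (hsub1 (hcons' c hc))
      · simp only [List.map_cons, List.map_nil, List.mem_singleton] at hc
        subst hc
        exact subset_Cn _ hconE
    have hmem : conjList ((l ++ [d]).map Default.con) ∈ Φ := ⟨hψ'Ψ, hψ'E⟩
    refine Cn_mono (Set.singleton_subset_iff.2 (Or.inr hmem)) ?_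
    exact mem_Cn_of_conjList (subset_Cn _ rfl) (by simp)
  have hEeq : E = Cn (W ∪ Φ) := Set.Subset.antisymm hsub2 hsub1
  have hWΦcons : Consistent (W ∪ Φ) := by
    intro hc
    apply hEcons
    rw [hEeq, Cn_Cn]
    exact hc
  refine ⟨Φ, hΦsub, hWΦcons, ?_, hEeq⟩
  intro Φ' hΦΦ' hΦ'Ψ hΦ'cons
  have key : ∀ l, Grounded D W l → conjList (l.map Default.con) ∈ Cn (W ∪ Φ') →
      ∀ c ∈ l.map Default.con, c ∈ E := by
    intro l hl
    induction hl with
    | nil => intro _ c hc; simp at hc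
    | @snoc l d hg hd hpre ih =>
        intro hconj c hc
        have hconjl : conjList (l.map Default.con) ∈ Cn (W ∪ Φ') := by
          refine conjList_mem_Cn ?_
          intro c' hc'
          exact mem_Cn_of_conjList hconj
            (by rw [List.map_append, List.mem_append]; exact Or.inl hc')
        have hcl := ih hconjl
        have hCnEsub : Cn E ⊆ Cn (W ∪ Φ') := by
          rw [hEeq, Cn_Cn]
          exact Cn_mono (Set.union_subset_union_right W hΦΦ')
        have hpreE : d.pre ∈ E := by
          refine hCnE (Cn_subset_of_subset_Cn ?_ hpre)
          rintro x (hx | hx)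
          · exact subset_Cn _ (hWE hx)
          · exact subset_Cn _ (hcl x hx)
        have hconCn : d.con ∈ Cn (W ∪ Φ') := mem_Cn_of_conjList hconj (by simp)
        have hconE : d.con ∈ E := by
          by_cases happ : d.con.neg ∈ Cn E
          · exact absurd hΦ'cons (not_consistent_of_mem_neg hconCn (hCnEsub happ))
          · exact extension_closed hE d hd ((normal_applicable (hN d hd)).2 happ) hpreE
        rw [List.map_append, List.mem_append] at hc
        rcases hc with hc | hc
        · exact hcl c hc
        · simp only [List.map_cons, List.map_nil, List.mem_singleton] at hc
          subst hc
          exact hconE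
  refine Set.Subset.antisymm ?_ hΦΦ'
  intro ψ hψ
  obtain ⟨l, hl, rfl⟩ := hΦ'Ψ hψ
  have hallE := key l hl (subset_Cn _ (Or.inr hψ))
  exact ⟨⟨l, hl, rfl⟩, hCnE (conjList_mem_Cn (fun c hc => subset_Cn _ (hallE c hc)))⟩

lemma family_mem_extension {D : Set (Default α)} {W Φ : Set (PropForm α)}
    (hN : ∀ d ∈ D, d.Normal)
    (hΦ : Φ ⊆ ChainSet D W) (hcons : Consistent (W ∪ Φ))
    (hmax : ∀ Φ', Φ ⊆ Φ' → Φ' ⊆ ChainSet D W → Consistent (W ∪ Φ') → Φ' = Φ) :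
    IsExtension D W (Cn (W ∪ Φ)) := by
  have hCnE : Cn (Cn (W ∪ Φ)) = Cn (W ∪ Φ) := Cn_Cn _
  have hFE : CnRules (Reduct D (Cn (W ∪ Φ))) W ⊆ Cn (W ∪ Φ) := by
    refine CnRules_min (fun x hx => subset_Cn _ (Or.inl hx))
      (fun x hx => by rwa [Cn_Cn] at hx) ?_
    rintro r ⟨d, hd, happ, rfl⟩ hpre
    obtain ⟨l, hl, hpre', hcons'⟩ := exists_grounded_chain hΦ hpre
    have hl' : Grounded D W (l ++ [d]) := hl.snoc hd hpre'
    have happ' : d.con.neg ∉ Cn (W ∪ Φ) := by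
      have h1 := (normal_applicable (hN d hd)).1 happ
      rw [hCnE] at h1
      exact h1
    obtain ⟨v, hv, hve⟩ := neg_notMem_Cn_iff.1 happ'
    have hψ'cons : Consistent (W ∪ (Φ ∪ {conjList ((l ++ [d]).map Default.con)})) := by
      refine consistent_iff.2 ⟨v, ?_⟩
      rintro χ (hχ | hχ | hχ)
      · exact hv χ (Or.inl hχ)
      · exact hv χ (Or.inr hχ)
      · rcases hχ with rfl
        refine (eval_conjList _).2 ?_
        intro c hc
        rw [List.map_append, List.mem_append] at hc
        rcases hc with hc | hc
        · exact hcons' c hc v hv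
        · simp only [List.map_cons, List.map_nil, List.mem_singleton] at hc
          subst hc
          exact hve
    have hψ'mem : conjList ((l ++ [d]).map Default.con) ∈ Φ := by
      have heq := hmax (Φ ∪ {conjList ((l ++ [d]).map Default.con)}) Set.subset_union_left
        (Set.union_subset hΦ (Set.singleton_subset_iff.2 ⟨l ++ [d], hl', rfl⟩)) hψ'cons
      rw [← heq]
      exact Or.inr rfl
    refine Cn_mono (Set.singleton_subset_iff.2 (Or.inr hψ'mem)) ?_
    exact mem_Cn_of_conjList (subset_Cn _ rfl) (by simp)
  have hEF : Cn (W ∪ Φ) ⊆ CnRules (Reduct D (Cn (W ∪ Φ))) W := by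
    have key : ∀ l, Grounded D W l → conjList (l.map Default.con) ∈ Cn (W ∪ Φ) →
        ∀ c ∈ l.map Default.con, c ∈ CnRules (Reduct D (Cn (W ∪ Φ))) W := by
      intro l hl
      induction hl with
      | nil => intro _ c hc; simp at hc
      | @snoc l d hg hd hpre ih =>
          intro hconj c hc
          have hconjl : conjList (l.map Default.con) ∈ Cn (W ∪ Φ) :=
            conjList_mem_Cn (fun c' hc' => mem_Cn_of_conjList hconj
              (by rw [List.map_append, List.mem_append]; exact Or.inl hc'))
          have hcl := ih hconjl
          have hpreF : d.pre ∈ CnRules (Reduct D (Cn (W ∪ Φ))) W := by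
            refine CnRules_theory _ _ (Cn_subset_of_subset_Cn ?_ hpre)
            rintro x (hx | hx)
            · exact subset_Cn _ (subset_CnRules _ _ hx)
            · exact subset_Cn _ (hcl x hx)
          have hconCn : d.con ∈ Cn (W ∪ Φ) := mem_Cn_of_conjList hconj (by simp)
          have happ : d.Applicable (Cn (W ∪ Φ)) := by
            refine (normal_applicable (hN d hd)).2 ?_
            rw [hCnE]
            intro hneg
            exact not_consistent_of_mem_neg hconCn hneg hcons
          have hconF : d.con ∈ CnRules (Reduct D (Cn (W ∪ Φ))) W :=
            CnRules_rules (d.pre, d.con) ⟨d, hd, happ, rfl⟩ hpreF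
          rw [List.map_append, List.mem_append] at hc
          rcases hc with hc | hc
          · exact hcl c hc
          · simp only [List.map_cons, List.map_nil, List.mem_singleton] at hc
            subst hc
            exact hconF
    have hΦF : Φ ⊆ CnRules (Reduct D (Cn (W ∪ Φ))) W := by
      intro ψ hψ
      obtain ⟨l, hl, heq⟩ := hΦ hψ
      subst heq
      have hallF := key l hl (subset_Cn _ (Or.inr hψ))
      exact CnRules_theory _ _ (conjList_mem_Cn (fun c hc => subset_Cn _ (hallF c hc)))
    intro x hx
    refine CnRules_theory _ _ (Cn_subset_of_subset_Cn ?_ hx)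
    rintro y (hy | hy)
    · exact subset_Cn _ (subset_CnRules _ _ hy)
    · exact subset_Cn _ (hΦF hy)
  exact Set.Subset.antisymm hEF hFE

lemma prereqfree_cnrules (Ψ W S : Set (PropForm α)) :
    CnRules (Reduct ((fun ψ => (⟨PropForm.fls.impl PropForm.fls, {ψ}, ψ⟩ : Default α)) '' Ψ) S) W
      = Cn (W ∪ {ψ | ψ ∈ Ψ ∧ ψ.neg ∉ Cn S}) := by
  apply Set.Subset.antisymm
  · refine CnRules_min (fun x hx => subset_Cn _ (Or.inl hx))
      (fun x hx => by rwa [Cn_Cn] at hx) ?_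
    rintro r ⟨d, hd, happ, rfl⟩ _
    obtain ⟨ψ, hψ, rfl⟩ := hd
    exact subset_Cn _ (Or.inr ⟨hψ, happ ψ (Finset.mem_singleton_self ψ)⟩)
  · intro x hx
    refine CnRules_theory _ _ (Cn_subset_of_subset_Cn ?_ hx)
    rintro y (hy | hy)
    · exact subset_Cn _ (subset_CnRules _ _ hy)
    · rcases hy with ⟨hyΨ, hyneg⟩
      refine subset_Cn _ ?_
      refine CnRules_rules (PropForm.fls.impl PropForm.fls, y)
        ⟨⟨PropForm.fls.impl PropForm.fls, {y}, y⟩, ⟨y, hyΨ, rfl⟩, ?_, rfl⟩ ?_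
      · intro γ hγ
        rw [Finset.mem_singleton] at hγ
        subst hγ
        exact hyneg
      · exact CnRules_theory _ _ (taut_mem_Cn _)

lemma family_representable {W Ψ : Set (PropForm α)} (hW : Consistent W) :
    ∃ D : Set (Default α), (∀ d ∈ D, d.Normal) ∧
      ext D W = {T | ∃ Φ ⊆ Ψ, Consistent (W ∪ Φ) ∧
        (∀ Φ', Φ ⊆ Φ' → Φ' ⊆ Ψ → Consistent (W ∪ Φ') → Φ' = Φ) ∧
        T = Cn (W ∪ Φ)} := by
  refine ⟨(fun ψ => (⟨PropForm.fls.impl PropForm.fls, {ψ}, ψ⟩ : Default α)) '' Ψ, ?_, ?_⟩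
  · rintro d ⟨ψ, hψ, rfl⟩
    rfl
  · ext S
    constructor
    · intro hS
      have hS' : S = Cn (W ∪ {ψ | ψ ∈ Ψ ∧ ψ.neg ∉ Cn S}) := by
        have h0 : IsExtension
            ((fun ψ => (⟨PropForm.fls.impl PropForm.fls, {ψ}, ψ⟩ : Default α)) '' Ψ) W S := hS
        rw [IsExtension] at h0
        rwa [prereqfree_cnrules] at h0
      set ΦS := {ψ | ψ ∈ Ψ ∧ ψ.neg ∉ Cn S} with hΦSdef
      have hScons : Consistent S := by
        by_contra hc
        rw [Consistent, not_not] at hc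
        have hΦSempty : ΦS = ∅ := by
          rw [Set.eq_empty_iff_forall_notMem]
          rintro ψ ⟨_, hneg⟩
          exact hneg (hc ▸ Set.mem_univ _)
        apply hW
        rw [hΦSempty, Set.union_empty] at hS'
        rw [← Cn_Cn W, ← hS']
        exact hc
      have hCnS : Cn S = S := by rw [hS', Cn_Cn]
      refine ⟨ΦS, fun ψ hψ => hψ.1, ?_, ?_, hS'⟩
      · intro hc
        apply hScons
        rw [hCnS, hS']
        exact hc
      · intro Φ' hΦΦ' hΦ'Ψ hΦ'cons
        refine Set.Subset.antisymm ?_ hΦΦ'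
        intro ψ hψ
        refine ⟨hΦ'Ψ hψ, ?_⟩
        intro hneg
        have h1 : ψ.neg ∈ Cn (W ∪ Φ') := by
          rw [hCnS, hS'] at hneg
          exact Cn_mono (Set.union_subset_union_right W hΦΦ') hneg
        exact not_consistent_of_mem_neg (subset_Cn _ (Or.inr hψ)) h1 hΦ'cons
    · rintro ⟨Φ, hΦΨ, hcons, hmax, rfl⟩
      show IsExtension _ _ _
      rw [IsExtension, prereqfree_cnrules]
      have heq : {ψ | ψ ∈ Ψ ∧ ψ.neg ∉ Cn (Cn (W ∪ Φ))} = Φ := by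
        apply Set.Subset.antisymm
        · rintro ψ ⟨hψΨ, hneg⟩
          rw [Cn_Cn] at hneg
          have hc : Consistent (W ∪ (Φ ∪ {ψ})) := by
            have := consistent_union_singleton hneg
            rwa [Set.union_assoc] at this
          have := hmax (Φ ∪ {ψ}) Set.subset_union_left
            (Set.union_subset hΦΨ (Set.singleton_subset_iff.2 hψΨ)) hc
          rw [← this]
          exact Or.inr rfl
        · intro ψ hψ
          refine ⟨hΦΨ hψ, ?_⟩
          rw [Cn_Cn]
          intro hneg
          exact not_consistent_of_mem_neg (subset_Cn _ (Or.inr hψ)) hneg hcons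
      rw [heq]

end Aux3

/-- characterization of families representable by normal default theories. -/
theorem representable_by_normal_iff {α : Type} [Denumerable α]
    (𝒯 : Set (Set (PropForm α))) :
    (∃ (D : Set (Default α)) (W : Set (PropForm α)),
        (∀ d ∈ D, d.Normal) ∧ ext D W = 𝒯) ↔
      (𝒯 = {Set.univ} ∨
        ∃ (W Ψ : Set (PropForm α)), Consistent W ∧
          𝒯 = {T | ∃ Φ ⊆ Ψ, Consistent (W ∪ Φ) ∧
            (∀ Φ', Φ ⊆ Φ' → Φ' ⊆ Ψ → Consistent (W ∪ Φ') → Φ' = Φ) ∧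
            T = Cn (W ∪ Φ)}) := by
  constructor
  · rintro ⟨D, W, hN, rfl⟩
    by_cases hW : Consistent W
    · right
      refine ⟨W, ChainSet D W, hW, ?_⟩
      ext S
      constructor
      · intro hS
        exact extension_mem_family hN hW hS
      · rintro ⟨Φ, hΦΨ, hcons, hmax, rfl⟩
        exact family_mem_extension hN hΦΨ hcons hmax
    · left
      have hCnW : Cn W = Set.univ := not_not.1 hW
      ext S
      rw [Set.mem_singleton_iff]
      constructor
      · intro hS
        have hS' : S = CnRules (Reduct D S) W := hS
        have hsub : Cn W ⊆ S := by
          rw [hS']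
          exact Cn_subset_CnRules _ _
        apply Set.eq_univ_of_univ_subset
        rw [← hCnW]
        exact hsub
      · rintro rfl
        show IsExtension D W Set.univ
        rw [IsExtension]
        have hRed : Reduct D Set.univ = ∅ := by
          rw [Set.eq_empty_iff_forall_notMem]
          rintro r ⟨d, hd, happ, rfl⟩
          have hconj : d.con ∈ d.jus := by
            rw [hN d hd]
            exact Finset.mem_singleton_self _
          exact happ d.con hconj (subset_Cn _ (Set.mem_univ _))
        rw [hRed]
        refine (Set.eq_univ_of_univ_subset ?_).symm
        rw [← hCnW]
        exact Cn_subset_CnRules _ _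
  · rintro (rfl | ⟨W, Ψ, hW, rfl⟩)
    · refine ⟨∅, {PropForm.fls}, ?_, ?_⟩
      · intro d hd
        exact absurd hd (Set.notMem_empty d)
      · ext S
        rw [Set.mem_singleton_iff]
        have hRed : Reduct (∅ : Set (Default α)) S = ∅ := by
          rw [Set.eq_empty_iff_forall_notMem]
          rintro r ⟨d, hd, _⟩
          exact hd
        have hflsuniv : Cn ({PropForm.fls} : Set (PropForm α)) = Set.univ := by
          apply Set.eq_univ_of_forall
          intro φ v hv
          exact (show False from hv PropForm.fls rfl).elim
        have hCR : CnRules (Reduct (∅ : Set (Default α)) S)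
            ({PropForm.fls} : Set (PropForm α)) = Set.univ := by
          rw [hRed]
          apply Set.eq_univ_of_univ_subset
          rw [← hflsuniv]
          exact Cn_subset_CnRules _ _
        show IsExtension _ _ _ ↔ _
        rw [IsExtension, hCR]
    · obtain ⟨D, hN, hext⟩ := family_representable (Ψ := Ψ) hW
      exact ⟨D, W, hN, hext⟩
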